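/- Let n ≥ 1 and let p : Matrix n n ℂ → ℂ be a differentiable function which is invariant under conjugation, i.e. p(g · A · g⁻¹) = p(A) for every invertible matrix g and every A. Then for all v, X ∈ Matrix n n ℂ, the derivative of p at v in the direction of the commutator [X, v] = X·v − v·X vanishes: (fderiv ℂ p v)(X·v − v·X) = 0. (This is the paper's Lemma for G = GL(n, ℂ): the Lie derivative of a G-invariant function vanishes in any direction tangent to a G-orbit.) -/

import Mathlib

attribute [local instance] Matrix.normedAddCommGroup Matrix.normedSpace

/-!
For an invertible `g`, conjugation invariance gives `p (g * v) = p (v * g)`. Taking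
`g = 1 + t • X`, invertible for small `t`, the functions `t ↦ p (v + t • (X * v))` and
`t ↦ p (v + t • (v * X))` agree near `0`, so the derivatives of `p` at `v` along `X * v`
and `v * X` coincide.
-/

open Filter Topology

theorem HasLineDerivAt.eq_of_eventuallyEq {𝕜 E F : Type*} [NontriviallyNormedField 𝕜]
    [NormedAddCommGroup E] [NormedSpace 𝕜 E] [NormedAddCommGroup F] [NormedSpace 𝕜 F]
    {f : E → F} {x v w : E} {f₀' f₁' : F}
    (h₀ : HasLineDerivAt 𝕜 f f₀' x v) (h₁ : HasLineDerivAt 𝕜 f f₁' x w)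
    (h : (fun t : 𝕜 => f (x + t • v)) =ᶠ[𝓝 0] fun t => f (x + t • w)) : f₀' = f₁' :=
  HasDerivAt.unique h₀ (HasDerivAt.congr_of_eventuallyEq h₁ h)

namespace Matrix

variable {m : Type*} [Fintype m] [DecidableEq m]

theorem eventually_isUnit_one_add_smul {𝕜 : Type*} [NormedField 𝕜]
    (X : Matrix m m 𝕜) : ∀ᶠ t in 𝓝 (0 : 𝕜), IsUnit (1 + t • X) := by
  have hdet : Continuous fun t : 𝕜 => (1 + t • X).det := by fun_prop
  have hdet₀ : (1 + (0 : 𝕜) • X).det ≠ 0 := by simp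
  filter_upwards [hdet.continuousAt.eventually_ne hdet₀] with t ht
  exact (isUnit_iff_isUnit_det _).mpr ht.isUnit

theorem apply_mul_comm_of_conj_invariant {R β : Type*} [CommRing R] {f : Matrix m m R → β}
    (hinv : ∀ g : Matrix m m R, IsUnit g → ∀ A, f (g * A * g⁻¹) = f A)
    {g : Matrix m m R} (hg : IsUnit g) (A : Matrix m m R) : f (g * A) = f (A * g) := by
  rw [← hinv g hg (A * g), ← mul_assoc,
    mul_nonsing_inv_cancel_right _ _ ((isUnit_iff_isUnit_det g).mp hg)]

theorem eventually_apply_add_smul_commutator_eq {𝕜 β : Type*} [NormedField 𝕜]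
    {f : Matrix m m 𝕜 → β} (hinv : ∀ g : Matrix m m 𝕜, IsUnit g → ∀ A, f (g * A * g⁻¹) = f A)
    (v X : Matrix m m 𝕜) :
    (fun t : 𝕜 => f (v + t • (X * v))) =ᶠ[𝓝 0] fun t => f (v + t • (v * X)) := by
  filter_upwards [eventually_isUnit_one_add_smul X] with t ht
  simpa [add_mul, mul_add] using apply_mul_comm_of_conj_invariant hinv ht v

end Matrix

theorem fderiv_conj_invariant_vanishes_on_commutator_general
    {n : ℕ}
    (p : Matrix (Fin n) (Fin n) ℂ → ℂ)
    (hdiff : Differentiable ℂ p)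
    (hinv : ∀ g : Matrix (Fin n) (Fin n) ℂ, IsUnit g →
      ∀ A : Matrix (Fin n) (Fin n) ℂ, p (g * A * g⁻¹) = p A)
    (v X : Matrix (Fin n) (Fin n) ℂ) :
    fderiv ℂ p v (X * v - v * X) = 0 := by
  have hp := (hdiff v).hasFDerivAt
  rw [map_sub, sub_eq_zero]
  exact (hp.hasLineDerivAt _).eq_of_eventuallyEq (hp.hasLineDerivAt _)
    (Matrix.eventually_apply_add_smul_commutator_eq hinv v X)

/-- Let `n ≥ 1` and let `p : Matrix n n ℂ → ℂ` be a differentiable function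
invariant under conjugation, i.e. `p(g·A·g⁻¹) = p(A)` for every invertible `g` and every
`A`.  Then for all `v, X`, the derivative of `p` at `v` in the direction of the
commutator `[X, v] = X·v − v·X` vanishes. -/
theorem fderiv_conj_invariant_vanishes_on_commutator
    {n : ℕ} (hn : 1 ≤ n)
    (p : Matrix (Fin n) (Fin n) ℂ → ℂ)
    (hdiff : Differentiable ℂ p)
    (hinv : ∀ g : Matrix (Fin n) (Fin n) ℂ, IsUnit g →
      ∀ A : Matrix (Fin n) (Fin n) ℂ, p (g * A * g⁻¹) = p A)
    (v X : Matrix (Fin n) (Fin n) ℂ) :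
    fderiv ℂ p v (X * v - v * X) = 0 :=
  fderiv_conj_invariant_vanishes_on_commutator_general p hdiff hinv v X
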